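/- arXiv:1406.7211 — 8 statements merged into one kernel-verified Lean document; each statement's English description precedes it below -/
import Mathlib

section
/- Let {(A,κ),(a,α),(ã,α̃)} be a covariant structure: (a,α) is a twisted action of a group G on the unital C*-algebra A, (ã,α̃) is a twisted action of a group G̃ on A, and κ : G × G̃ → U(A) is normalized (κ(e,ξ) = 1 = κ(x,ε)) and satisfies: (i) a_x ∘ ã_ξ = Ad(κ(x,ξ)) ∘ ã_ξ ∘ a_x; (ii) a_x(α̃(ξ,η)) = κ(x,ξ)·ã_ξ(κ(x,η))·α̃(ξ,η)·κ(x,ξη)*; (iii) ã_ξ(α(x,y)) = κ(x,ξ)*·a_x(κ(y,ξ)*)·α(x,y)·κ(xy,ξ). Then the full compatibility relation ã_ξ(κ(x,η))·α̃(ξ,η)·ã_{ξη}(α(x,y)) = κ(x,ξ)*·(a_x ∘ ã_ξ)(κ(y,η)*)·a_x(κ(y,ξ)*)·α(x,y)·a_{xy}(α̃(ξ,η))·κ(xy,ξη) holds for all x,y ∈ G, ξ,η ∈ G̃. -/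
noncomputable section

/-- An element of a star monoid is unitary if `star u` is a two-sided inverse. -/
def IsUnitaryElem {A : Type*} [Monoid A] [StarMul A] (u : A) : Prop :=
  star u * u = 1 ∧ u * star u = 1

/-- A twisted action `(a, α)` of a group `G` on a unital star algebra `A`. -/
def IsTwistedAction {G A : Type*} [Group G] [Ring A] [StarRing A] [Algebra ℂ A]
    (a : G → A ≃⋆ₐ[ℂ] A) (α : G → G → A) : Prop :=
  (∀ b : A, a 1 b = b) ∧
  (∀ x y : G, IsUnitaryElem (α x y)) ∧
  (∀ (x y : G) (b : A), a x (a y b) = α x y * a (x * y) b * star (α x y)) ∧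
  (∀ x : G, α x 1 = 1) ∧
  (∀ x : G, α 1 x = 1) ∧
  (∀ x y z : G, α x y * α (x * y) z = a x (α y z) * α x (y * z))

/-- A covariant structure `{(A,κ),(a,α),(ã,α̃)}`. -/
def IsCovariantStructure {G G' A : Type*} [Group G] [Group G'] [Ring A] [StarRing A]
    [Algebra ℂ A]
    (a : G → A ≃⋆ₐ[ℂ] A) (α : G → G → A)
    (ta : G' → A ≃⋆ₐ[ℂ] A) (tα : G' → G' → A)
    (κ : G → G' → A) : Prop :=
  IsTwistedAction a α ∧ IsTwistedAction ta tα ∧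
  (∀ (x : G) (ξ : G'), IsUnitaryElem (κ x ξ)) ∧
  (∀ ξ : G', κ 1 ξ = 1) ∧
  (∀ x : G, κ x 1 = 1) ∧
  (∀ (x : G) (ξ : G') (b : A), a x (ta ξ b) = κ x ξ * ta ξ (a x b) * star (κ x ξ)) ∧
  (∀ (x : G) (ξ η : G'), a x (tα ξ η) = κ x ξ * ta ξ (κ x η) * tα ξ η * star (κ x (ξ * η))) ∧
  (∀ (x y : G) (ξ : G'), ta ξ (α x y) = star (κ x ξ) * a x (star (κ y ξ)) * α x y * κ (x * y) ξ)

/-- The full compatibility relation follows from the three covariant-structure axioms. -/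
theorem stmt_1 {G G' A : Type*} [Group G] [Group G']
    [NormedRing A] [StarRing A] [CStarRing A] [NormedAlgebra ℂ A] [CompleteSpace A]
    [StarModule ℂ A]
    (a : G → A ≃⋆ₐ[ℂ] A) (α : G → G → A)
    (ta : G' → A ≃⋆ₐ[ℂ] A) (tα : G' → G' → A) (κ : G → G' → A)
    (h : IsCovariantStructure a α ta tα κ) :
    ∀ (x y : G) (ξ η : G'),
      ta ξ (κ x η) * tα ξ η * ta (ξ * η) (α x y) =
        star (κ x ξ) * a x (ta ξ (star (κ y η))) * a x (star (κ y ξ)) * α x y *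
          a (x * y) (tα ξ η) * κ (x * y) (ξ * η) := by
  intro x y ξ η
  obtain ⟨⟨-, hαu, -, -, -, -⟩, ⟨-, htαu, htacomp, -, -, -⟩, hκu, -, -, hC1, hC2, hC3⟩ := h
  -- unitarity facts
  have k1 : ∀ (z : G) (ζ : G'), star (κ z ζ) * κ z ζ = 1 := fun z ζ => (hκu z ζ).1
  have k2 : ∀ (z : G) (ζ : G'), κ z ζ * star (κ z ζ) = 1 := fun z ζ => (hκu z ζ).2
  have t1 : star (tα ξ η) * tα ξ η = 1 := (htαu ξ η).1
  have cancel1 : ∀ (z : G) (ζ : G') (r : A), star (κ z ζ) * (κ z ζ * r) = r := fun z ζ r => by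
    rw [← mul_assoc, k1, one_mul]
  -- composition in the convenient form
  have hcomp : ∀ b : A, tα ξ η * ta (ξ * η) b = ta ξ (ta η b) * tα ξ η := by
    intro b
    rw [htacomp]
    simp [mul_assoc, t1]
  -- hC1 in the reversed form
  have hC1' : ∀ b : A, ta ξ (a x b) = star (κ x ξ) * a x (ta ξ b) * κ x ξ := by
    intro b
    rw [hC1]
    simp [mul_assoc, k1, cancel1]
  -- hC2 at (x*y, ξ, η), multiplied on the right by κ (x*y) (ξ*η)
  have hC2' : κ (x*y) ξ * (ta ξ (κ (x*y) η) * tα ξ η) =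
      a (x*y) (tα ξ η) * κ (x*y) (ξ*η) := by
    rw [hC2]
    simp [mul_assoc, k1 (x*y) (ξ*η)]
  calc ta ξ (κ x η) * tα ξ η * ta (ξ * η) (α x y)
      = ta ξ (κ x η) * (tα ξ η * ta (ξ * η) (α x y)) := by rw [mul_assoc]
    _ = ta ξ (κ x η) * (ta ξ (ta η (α x y)) * tα ξ η) := by rw [hcomp]
    _ = ta ξ (κ x η * ta η (α x y)) * tα ξ η := by rw [map_mul, mul_assoc]
    _ = ta ξ (κ x η * (star (κ x η) * (a x (star (κ y η)) * (α x y * κ (x*y) η)))) * tα ξ η := by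
        rw [hC3 x y η]; simp only [mul_assoc]
    _ = ta ξ (a x (star (κ y η)) * (α x y * κ (x*y) η)) * tα ξ η := by
        rw [← mul_assoc (κ x η), k2 x η, one_mul]
    _ = ta ξ (a x (star (κ y η))) * (ta ξ (α x y) * (ta ξ (κ (x*y) η) * tα ξ η)) := by
        rw [map_mul, map_mul]; simp only [mul_assoc]
    _ = (star (κ x ξ) * a x (ta ξ (star (κ y η))) * κ x ξ) *
          ((star (κ x ξ) * a x (star (κ y ξ)) * α x y * κ (x*y) ξ) *
            (ta ξ (κ (x*y) η) * tα ξ η)) := by rw [hC1', hC3 x y ξ]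
    _ = star (κ x ξ) * a x (ta ξ (star (κ y η))) *
          (κ x ξ * star (κ x ξ)) * (a x (star (κ y ξ)) * (α x y *
            (κ (x*y) ξ * (ta ξ (κ (x*y) η) * tα ξ η)))) := by simp only [mul_assoc]
    _ = star (κ x ξ) * a x (ta ξ (star (κ y η))) * (a x (star (κ y ξ)) * (α x y *
            (a (x*y) (tα ξ η) * κ (x*y) (ξ*η)))) := by rw [k2 x ξ, hC2']; simp only [mul_one, mul_assoc]
    _ = star (κ x ξ) * a x (ta ξ (star (κ y η))) * a x (star (κ y ξ)) * α x y *
          a (x * y) (tα ξ η) * κ (x * y) (ξ * η) := by simp only [mul_assoc]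
end
end

section
/- Let {(A,κ),(a,α),(ã,α̃)} be a covariant structure of the groups G and G̃ on the unital C*-algebra A. Define →a_{(x,ξ)} := ã_ξ ∘ a_x and →α((x,ξ),(y,η)) := ã_ξ(κ(x,η))·α̃(ξ,η)·ã_{ξη}(α(x,y)). Then (→a, →α) is a twisted action of the product group G × G̃ on A: →a_{(e,ε)} = id, →a_X ∘ →a_Y = Ad(→α(X,Y)) ∘ →a_{XY}, →α is normalized, and →α(X,Y)·→α(XY,Z) = →a_X(→α(Y,Z))·→α(X,YZ) for all X,Y,Z ∈ G × G̃. -/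
noncomputable section

section Helpers

variable {A : Type*} [Monoid A] [StarMul A]

theorem unit_mul {u v : A} (hu : IsUnitaryElem u) (hv : IsUnitaryElem v) :
    IsUnitaryElem (u * v) := by
  constructor
  · rw [star_mul, mul_assoc, ← mul_assoc (star u), hu.1, one_mul, hv.1]
  · rw [star_mul, mul_assoc, ← mul_assoc v, hv.2, one_mul, hu.2]

theorem unit_mul_star_cancel {u : A} (hu : IsUnitaryElem u) (t : A) :
    u * (star u * t) = t := by rw [← mul_assoc, hu.2, one_mul]

theorem unit_star_mul_cancel {u : A} (hu : IsUnitaryElem u) (t : A) :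
    star u * (u * t) = t := by rw [← mul_assoc, hu.1, one_mul]

end Helpers

theorem unit_map {A : Type*} [Ring A] [StarRing A] [Algebra ℂ A]
    (f : A ≃⋆ₐ[ℂ] A) {u : A} (hu : IsUnitaryElem u) : IsUnitaryElem (f u) :=
  ⟨by rw [← map_star, ← map_mul, hu.1, map_one],
   by rw [← map_star, ← map_mul, hu.2, map_one]⟩

/-- The pair `(→a, →α)` attached to a covariant structure is a twisted action of `G × G̃`:
`→a_(x,ξ) = ã_ξ ∘ a_x` and `→α((x,ξ),(y,η)) = ã_ξ(κ(x,η))·α̃(ξ,η)·ã_ξη(α(x,y))`. -/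
theorem stmt_3 {G G' A : Type*} [Group G] [Group G']
    [NormedRing A] [StarRing A] [CStarRing A] [NormedAlgebra ℂ A] [CompleteSpace A]
    [StarModule ℂ A]
    (a : G → A ≃⋆ₐ[ℂ] A) (α : G → G → A)
    (ta : G' → A ≃⋆ₐ[ℂ] A) (tα : G' → G' → A) (κ : G → G' → A)
    (h : IsCovariantStructure a α ta tα κ) :
    (∀ b : A, ta 1 (a 1 b) = b) ∧
    (∀ (x y : G) (ξ η : G'),
      IsUnitaryElem (ta ξ (κ x η) * tα ξ η * ta (ξ * η) (α x y))) ∧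
    (∀ (x y : G) (ξ η : G') (b : A),
      ta ξ (a x (ta η (a y b))) =
        (ta ξ (κ x η) * tα ξ η * ta (ξ * η) (α x y)) * ta (ξ * η) (a (x * y) b) *
          star (ta ξ (κ x η) * tα ξ η * ta (ξ * η) (α x y))) ∧
    (∀ (x : G) (ξ : G'),
      ta ξ (κ x (1 : G')) * tα ξ 1 * ta (ξ * 1) (α x (1 : G)) = 1) ∧
    (∀ (y : G) (η : G'),
      ta (1 : G') (κ (1 : G) η) * tα 1 η * ta (1 * η) (α (1 : G) y) = 1) ∧
    (∀ (x y z : G) (ξ η ζ : G'),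
      (ta ξ (κ x η) * tα ξ η * ta (ξ * η) (α x y)) *
        (ta (ξ * η) (κ (x * y) ζ) * tα (ξ * η) ζ * ta (ξ * η * ζ) (α (x * y) z)) =
      ta ξ (a x (ta η (κ y ζ) * tα η ζ * ta (η * ζ) (α y z))) *
        (ta ξ (κ x (η * ζ)) * tα ξ (η * ζ) * ta (ξ * (η * ζ)) (α x (y * z)))) := by
  obtain ⟨⟨ha1, hαu, haAd, hαr, hαl, hαc⟩, ⟨hta1, htαu, htaAd, htαr, htαl, htαc⟩,
    hκu, hκ1, hκ1', hC1, hC2, hC3⟩ := h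
  refine ⟨?_, ?_, ?_, ?_, ?_, ?_⟩
  · intro b; rw [ha1, hta1]
  · intro x y ξ η
    exact unit_mul (unit_mul (unit_map (ta ξ) (hκu x η)) (htαu ξ η))
      (unit_map (ta (ξ * η)) (hαu x y))
  · intro x y ξ η b
    rw [hC1 x η (a y b), haAd x y b]
    simp only [map_mul, map_star, htaAd]
    simp only [star_mul, star_star, mul_assoc,
      unit_star_mul_cancel (htαu ξ η), unit_mul_star_cancel (htαu ξ η)]
  · intro x ξ
    simp [hκ1', hαr, htαr]
  · intro y η
    simp [hκ1, hαl, htαl]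
  · intro x y z ξ η ζ
    -- key identity: α x y · κ(xy,ζ) = a_x(κ(y,ζ)) · κ(x,ζ) · ta_ζ(α x y)
    have key : a x (κ y ζ) * (κ x ζ * ta ζ (α x y)) = α x y * κ (x * y) ζ := by
      rw [hC3 x y ζ]
      simp only [map_star, mul_assoc]
      rw [unit_mul_star_cancel (hκu x ζ), unit_mul_star_cancel (unit_map (a x) (hκu y ζ))]
    -- solved form of the tα-cocycle identity
    have htc : ta ξ (tα η ζ) = tα ξ η * (tα (ξ * η) ζ * star (tα ξ (η * ζ))) := by
      have h1 : ta ξ (tα η ζ) * (tα ξ (η * ζ) * star (tα ξ (η * ζ))) = ta ξ (tα η ζ) := by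
        rw [(htαu ξ (η * ζ)).2, mul_one]
      rw [← h1, ← mul_assoc, ← htαc, mul_assoc]
    -- the α-cocycle identity transported by ta
    have hmid2 : ta (ξ * (η * ζ)) (a x (α y z)) * ta (ξ * (η * ζ)) (α x (y * z)) =
        ta (ξ * (η * ζ)) (α x y) * ta (ξ * (η * ζ)) (α (x * y) z) := by
      rw [← map_mul, ← map_mul, hαc]
    -- expansion of a_x over the cocycle →α((y,η),(z,ζ))
    have e1 : a x (ta η (κ y ζ) * tα η ζ * ta (η * ζ) (α y z)) =
        κ x η * (ta η (a x (κ y ζ)) * (ta η (κ x ζ) *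
          (tα η ζ * (ta (η * ζ) (a x (α y z)) * star (κ x (η * ζ)))))) := by
      rw [map_mul, map_mul, hC1 x η, hC2 x η ζ, hC1 x (η * ζ)]
      simp only [mul_assoc]
      rw [unit_star_mul_cancel (hκu x η), unit_star_mul_cancel (hκu x (η * ζ))]
    -- final recombination
    have hfin : ta (ξ * η) (α x y) * (ta (ξ * η) (κ (x * y) ζ) *
          (tα (ξ * η) ζ * ta (ξ * (η * ζ)) (α (x * y) z))) =
        ta (ξ * η) (a x (κ y ζ)) * (ta (ξ * η) (κ x ζ) *
          (tα (ξ * η) ζ * (ta (ξ * (η * ζ)) (α x y) * ta (ξ * (η * ζ)) (α (x * y) z)))) := by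
      rw [← mul_assoc, ← map_mul, ← key, map_mul, map_mul, htaAd (ξ * η) ζ (α x y)]
      simp only [mul_assoc, unit_star_mul_cancel (htαu (ξ * η) ζ)]
    rw [e1]
    simp only [map_mul, map_star, htaAd, htc]
    simp only [mul_assoc]
    simp only [unit_star_mul_cancel (htαu ξ η), unit_star_mul_cancel (htαu ξ (η * ζ)),
      unit_star_mul_cancel (unit_map (ta ξ) (hκu x (η * ζ)))]
    rw [hmid2, hfin]
end
end

section
/- Let {(A,κ),(a,α),(ã,α̃)} be a covariant structure and define ←a_{(x,ξ)} := a_x ∘ ã_ξ and ←α((x,ξ),(y,η)) := a_x(κ(y,ξ)*)·α(x,y)·a_{xy}(α̃(ξ,η)). Then (←a,←α) is also a twisted action of G × G̃ on A, and it is exterior equivalent to (→a,→α) via the 1-cochain κ; that is, ←a_X = Ad(κ(X)) ∘ →a_X and ←α(X,Y) = κ(X)·→a_X(κ(Y))·→α(X,Y)·κ(XY)* for all X = (x,ξ), Y = (y,η) in G × G̃, where →a_{(x,ξ)} = ã_ξ∘a_x and →α((x,ξ),(y,η)) = ã_ξ(κ(x,η))α̃(ξ,η)ã_{ξη}(α(x,y)).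 -/
noncomputable section

namespace IsUnitaryElem

variable {A : Type*} [Monoid A] [StarMul A] {u v : A}

theorem star' (h : IsUnitaryElem u) : IsUnitaryElem (star u) := by
  refine ⟨?_, ?_⟩ <;> simp [h.1, h.2]

theorem mul (hu : IsUnitaryElem u) (hv : IsUnitaryElem v) : IsUnitaryElem (u * v) := by
  constructor
  · rw [star_mul, mul_assoc, ← mul_assoc (star u), hu.1, one_mul, hv.1]
  · rw [star_mul, mul_assoc, ← mul_assoc v, hv.2, one_mul, hu.2]

theorem cancel_left (h : IsUnitaryElem u) (c : A) : u * (star u * c) = c := by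
  rw [← mul_assoc, h.2, one_mul]

theorem cancel_left' (h : IsUnitaryElem u) (c : A) : star u * (u * c) = c := by
  rw [← mul_assoc, h.1, one_mul]

end IsUnitaryElem

theorem IsUnitaryElem.map {A : Type*} [Ring A] [StarRing A] [Algebra ℂ A]
    (f : A ≃⋆ₐ[ℂ] A) {u : A} (h : IsUnitaryElem u) : IsUnitaryElem (f u) := by
  constructor
  · rw [← map_star, ← map_mul, h.1, map_one]
  · rw [← map_star, ← map_mul, h.2, map_one]

/-- The pair `(←a, ←α)`, `←a_(x,ξ) = a_x ∘ ã_ξ`,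
`←α((x,ξ),(y,η)) = a_x(κ(y,ξ)*)·α(x,y)·a_xy(α̃(ξ,η))`, is a twisted action of `G × G̃`,
exterior equivalent to `(→a,→α)` via the 1-cochain `κ`. -/
theorem stmt_4 {G G' A : Type*} [Group G] [Group G']
    [NormedRing A] [StarRing A] [CStarRing A] [NormedAlgebra ℂ A] [CompleteSpace A]
    [StarModule ℂ A]
    (a : G → A ≃⋆ₐ[ℂ] A) (α : G → G → A)
    (ta : G' → A ≃⋆ₐ[ℂ] A) (tα : G' → G' → A) (κ : G → G' → A)
    (h : IsCovariantStructure a α ta tα κ) :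
    (∀ b : A, a 1 (ta 1 b) = b) ∧
    (∀ (x y : G) (ξ η : G'),
      IsUnitaryElem (a x (star (κ y ξ)) * α x y * a (x * y) (tα ξ η))) ∧
    (∀ (x y : G) (ξ η : G') (b : A),
      a x (ta ξ (a y (ta η b))) =
        (a x (star (κ y ξ)) * α x y * a (x * y) (tα ξ η)) * a (x * y) (ta (ξ * η) b) *
          star (a x (star (κ y ξ)) * α x y * a (x * y) (tα ξ η))) ∧
    (∀ (x : G) (ξ : G'),
      a x (star (κ (1 : G) ξ)) * α x 1 * a (x * 1) (tα ξ (1 : G')) = 1) ∧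
    (∀ (y : G) (η : G'),
      a (1 : G) (star (κ y (1 : G'))) * α 1 y * a (1 * y) (tα (1 : G') η) = 1) ∧
    (∀ (x y z : G) (ξ η ζ : G'),
      (a x (star (κ y ξ)) * α x y * a (x * y) (tα ξ η)) *
        (a (x * y) (star (κ z (ξ * η))) * α (x * y) z * a (x * y * z) (tα (ξ * η) ζ)) =
      a x (ta ξ (a y (star (κ z η)) * α y z * a (y * z) (tα η ζ))) *
        (a x (star (κ (y * z) ξ)) * α x (y * z) * a (x * (y * z)) (tα ξ (η * ζ)))) ∧
    (∀ (x : G) (ξ : G') (b : A),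
      a x (ta ξ b) = κ x ξ * ta ξ (a x b) * star (κ x ξ)) ∧
    (∀ (x y : G) (ξ η : G'),
      a x (star (κ y ξ)) * α x y * a (x * y) (tα ξ η) =
        κ x ξ * ta ξ (a x (κ y η)) *
          (ta ξ (κ x η) * tα ξ η * ta (ξ * η) (α x y)) * star (κ (x * y) (ξ * η))) := by
  obtain ⟨⟨ha1, hαu, acoc, hα1, hα1', αcoc⟩, ⟨hta1, htαu, tacoc, htα1, htα1', tαcoc⟩,
    hκu, hκe, hκe', cov, kα, kβ⟩ := h
  -- expansion rule: a x (α y z) in terms of α's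
  have αexp : ∀ (x y z : G), a x (α y z) = α x y * α (x * y) z * star (α x (y * z)) := by
    intro x y z
    have h0 := congrArg (· * star (α x (y * z))) (αcoc x y z)
    simpa only [mul_assoc, (hαu x (y*z)).2, mul_one] using h0.symm
  have tαexp : ∀ (ξ η ζ : G'), ta ξ (tα η ζ) = tα ξ η * tα (ξ * η) ζ * star (tα ξ (η * ζ)) := by
    intro ξ η ζ
    have h0 := congrArg (· * star (tα ξ (η * ζ))) (tαcoc ξ η ζ)
    simpa only [mul_assoc, (htαu ξ (η*ζ)).2, mul_one] using h0.symm
  -- κ cancellations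
  have kc1 : ∀ (x : G) (ξ : G') (c : A), κ x ξ * (star (κ x ξ) * c) = c :=
    fun x ξ c => (hκu x ξ).cancel_left c
  have kc2 : ∀ (x : G) (ξ : G') (c : A), star (κ x ξ) * (κ x ξ * c) = c :=
    fun x ξ c => (hκu x ξ).cancel_left' c
  have kc3 : ∀ (x : G) (ξ : G'), κ x ξ * star (κ x ξ) = 1 := fun x ξ => (hκu x ξ).2
  have kc4 : ∀ (x : G) (ξ : G'), star (κ x ξ) * κ x ξ = 1 := fun x ξ => (hκu x ξ).1
  have ac1 : ∀ (x y : G) (c : A), α x y * (star (α x y) * c) = c :=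
    fun x y c => (hαu x y).cancel_left c
  have ac2 : ∀ (x y : G) (c : A), star (α x y) * (α x y * c) = c :=
    fun x y c => (hαu x y).cancel_left' c
  have ac3 : ∀ (x y : G), α x y * star (α x y) = 1 := fun x y => (hαu x y).2
  have ac4 : ∀ (x y : G), star (α x y) * α x y = 1 := fun x y => (hαu x y).1
  have tc1 : ∀ (ξ η : G') (c : A), tα ξ η * (star (tα ξ η) * c) = c :=
    fun ξ η c => (htαu ξ η).cancel_left c
  have tc2 : ∀ (ξ η : G') (c : A), star (tα ξ η) * (tα ξ η * c) = c :=
    fun ξ η c => (htαu ξ η).cancel_left' c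
  have tc3 : ∀ (ξ η : G'), tα ξ η * star (tα ξ η) = 1 := fun ξ η => (htαu ξ η).2
  have tc4 : ∀ (ξ η : G'), star (tα ξ η) * tα ξ η = 1 := fun ξ η => (htαu ξ η).1
  -- mapped cancellation
  have mc : ∀ (f : A ≃⋆ₐ[ℂ] A) (u : A), IsUnitaryElem u → ∀ c : A,
      f u * (f (star u) * c) = c := by
    intro f u hu c
    rw [← mul_assoc, ← map_mul, hu.2, map_one, one_mul]
  -- bridge lemmas
  have kβ2 : ∀ (x y : G) (σ : G') (c : A),
      star ((a x) (κ y σ)) * (α x y * (κ (x*y) σ * c)) = κ x σ * (ta σ (α x y) * c) := by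
    intro x y σ c
    rw [kβ]
    simp only [map_star, mul_assoc, kc1]
  have kβ3 : ∀ (x y : G) (σ : G') (c : A),
      star (κ (x*y) σ) * (star (α x y) * ((a x) (κ y σ) * (κ x σ * c))) =
        star (ta σ (α x y)) * c := by
    intro x y σ c
    rw [kβ]
    simp only [star_mul, map_star, star_star, mul_assoc, kc2]
  have core0 : ∀ (x y : G) (ξ η : G'),
      ta ξ (α x y) * (ta ξ (κ (x*y) η) * tα ξ η) =
        ta ξ ((a x) (κ y η)) * (ta ξ (κ x η) * (tα ξ η * ta (ξ*η) (α x y))) := by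
    intro x y ξ η
    have h1 : tα ξ η * ta (ξ*η) (α x y) = ta ξ (ta η (α x y)) * tα ξ η := by
      rw [tacoc]
      simp only [mul_assoc, tc4, mul_one]
    have h2 : α x y * κ (x*y) η = (a x) (κ y η) * (κ x η * ta η (α x y)) := by
      rw [kβ]
      simp only [mul_assoc, kc1, mc (a x) (κ y η) (hκu y η)]
    rw [h1, ← mul_assoc (ta ξ ((a x) (κ y η))), ← map_mul, ← mul_assoc, ← map_mul,
      ← mul_assoc, ← map_mul, h2, mul_assoc]
  have tcore : ∀ (x y : G) (ξ η : G') (c : A),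
      ta ξ (α x y) * (ta ξ (κ (x*y) η) * (tα ξ η * c)) =
        ta ξ ((a x) (κ y η)) * (ta ξ (κ x η) * (tα ξ η * (ta (ξ*η) (α x y) * c))) := by
    intro x y ξ η c
    have h0 := congrArg (· * c) (core0 x y ξ η)
    simpa only [mul_assoc] using h0
  have score : ∀ (x y : G) (ξ η : G') (c : A),
      star (ta (ξ*η) (α x y)) * (star (tα ξ η) * (star (ta ξ (κ x η)) *
        (star (ta ξ ((a x) (κ y η))) * c))) =
      star (tα ξ η) * (star (ta ξ (κ (x*y) η)) * (star (ta ξ (α x y)) * c)) := by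
    intro x y ξ η c
    have h0 := congrArg (fun t => star t * c) (core0 x y ξ η)
    simpa only [star_mul, mul_assoc] using h0.symm
  -- mapped unitary cancellations
  have akc1 : ∀ (p q : G) (σ : G') (c : A), (a p) (κ q σ) * (star ((a p) (κ q σ)) * c) = c :=
    fun p q σ c => ((hκu q σ).map (a p)).cancel_left c
  have akc2 : ∀ (p q : G) (σ : G') (c : A), star ((a p) (κ q σ)) * ((a p) (κ q σ) * c) = c :=
    fun p q σ c => ((hκu q σ).map (a p)).cancel_left' c
  have tk1 : ∀ (σ τ : G') (p : G) (c : A), (ta σ) (κ p τ) * (star ((ta σ) (κ p τ)) * c) = c :=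
    fun σ τ p c => ((hκu p τ).map (ta σ)).cancel_left c
  have tk2 : ∀ (σ τ : G') (p : G) (c : A), star ((ta σ) (κ p τ)) * ((ta σ) (κ p τ) * c) = c :=
    fun σ τ p c => ((hκu p τ).map (ta σ)).cancel_left' c
  have ttk1 : ∀ (σ τ : G') (p q : G) (c : A),
      (ta σ) ((a p) (κ q τ)) * (star ((ta σ) ((a p) (κ q τ))) * c) = c :=
    fun σ τ p q c => (((hκu q τ).map (a p)).map (ta σ)).cancel_left c
  have ttk2 : ∀ (σ τ : G') (p q : G) (c : A),
      star ((ta σ) ((a p) (κ q τ))) * ((ta σ) ((a p) (κ q τ)) * c) = c :=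
    fun σ τ p q c => (((hκu q τ).map (a p)).map (ta σ)).cancel_left' c
  -- tailed version of kβ
  have kβt : ∀ (x y : G) (ξ : G') (c : A),
      star (κ x ξ) * (star ((a x) (κ y ξ)) * (α x y * (κ (x*y) ξ * c))) = ta ξ (α x y) * c := by
    intro x y ξ c
    rw [kβ]
    simp only [map_star, mul_assoc]
  refine ⟨?_, ?_, ?_, ?_, ?_, ?_, cov, ?_⟩
  · intro b; rw [hta1, ha1]
  · intro x y ξ η
    exact (((hκu y ξ).star'.map (a x)).mul (hαu x y)).mul ((htαu ξ η).map (a (x*y)))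
  · intro x y ξ η b
    have key : ∀ c : A,
        a x (ta ξ (a y (ta η b))) * c =
          ((a x (star (κ y ξ)) * α x y * a (x * y) (tα ξ η)) * a (x * y) (ta (ξ * η) b) *
            star (a x (star (κ y ξ)) * α x y * a (x * y) (tα ξ η))) * c := by
      intro c
      simp only [cov, acoc, tacoc, kα, kβ, map_mul, map_star, star_mul, star_star, mul_assoc,
        kc1, kc2, kc3, kc4, ac1, ac2, ac3, ac4, tc1, tc2, tc3, tc4, mul_one, one_mul]
      rw [kβ2 x y (ξ*η)]
      simp only [kc2]
      rw [kβ3 x y (ξ*η), kβ2 x y ξ, tcore, score,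
        ← kβ3 x y ξ (star (κ x ξ) * c)]
      simp only [kc1]
    simpa using key 1
  · intro x ξ
    simp [hκe, hα1, htα1]
  · intro y η
    simp [hκe', hα1', htα1', ha1]
  · intro x y z ξ η ζ
    have key : ∀ c : A,
        ((a x (star (κ y ξ)) * α x y * a (x * y) (tα ξ η)) *
          (a (x * y) (star (κ z (ξ * η))) * α (x * y) z * a (x * y * z) (tα (ξ * η) ζ))) * c =
        (a x (ta ξ (a y (star (κ z η)) * α y z * a (y * z) (tα η ζ))) *
          (a x (star (κ (y * z) ξ)) * α x (y * z) * a (x * (y * z)) (tα ξ (η * ζ)))) * c := by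
      intro c
      simp only [cov, acoc, tacoc, kα, kβ, αexp, tαexp, map_mul, map_star, star_mul, star_star,
        mul_assoc, kc1, kc2, kc3, kc4, ac1, ac2, ac3, ac4, tc1, tc2, tc3, tc4,
        akc1, akc2, tk1, tk2, ttk1, ttk2, mul_one, one_mul]
      have kβ2a := kβ2 (x*y) z (ξ*η)
      simp only [mul_assoc] at kβ2a
      have tcoreB := tcore x (y*z) (ξ*η) ζ
      simp only [mul_assoc] at tcoreB
      have kβta := kβt (x*y) z ξ
      simp only [mul_assoc] at kβta
      have tcoreC := tcore (x*y) z ξ η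
      simp only [mul_assoc] at tcoreC
      rw [kβ2a]
      simp only [kc2]
      rw [kβ2 x (y*z) ξ]
      simp only [kc2]
      rw [tcore x (y*z) ξ (η*ζ)]
      simp only [ttk2, tk2, tc2]
      rw [← tcoreB, ← tcore x (y*z) ξ η, kβ x (y*z) ξ]
      simp only [map_star, mul_assoc, kc1, kc2, akc1, ac2]
      rw [kβta, tcoreC]
      simp only [ttk2]
    simpa using key 1
  · intro x y ξ η
    have key : ∀ c : A,
        (a x (star (κ y ξ)) * α x y * a (x * y) (tα ξ η)) * c =
          (κ x ξ * ta ξ (a x (κ y η)) *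
            (ta ξ (κ x η) * tα ξ η * ta (ξ * η) (α x y)) * star (κ (x * y) (ξ * η))) * c := by
      intro c
      simp only [kα, map_star, mul_assoc]
      rw [kβ2 x y ξ, tcore]
    simpa using key 1
end
end

section
/- Let (ã,α̃) be a twisted action of a group G̃ on the unital C*-algebra A and let ρ : G → U(A) be a map with ρ_e = 1 from a group G, together with a normalized κ : G × G̃ → U(A), such that the covariance condition ã_ξ(ρ_x) = κ(x,ξ)*·ρ_x holds for all x ∈ G, ξ ∈ G̃. Define a_x := Ad(ρ_x) and α(x,y) := ρ_x ρ_y ρ_{xy}*. Then {(A,κ),(a,α),(ã,α̃)} is a covariant structure: (a,α) is a twisted action of G on A, and the three compatibility relations hold: a_x∘ã_ξ = Ad(κ(x,ξ))∘ã_ξ∘a_x; ã_ξ(α(x,y)) = κ(x,ξ)*·a_x(κ(y,ξ)*)·α(x,y)·κ(xy,ξ); and ρ_x·α̃(ξ,η)·ρ_x* = κ(x,ξ)·ã_ξ(κ(x,η))·α̃(ξ,η)·κ(x,ξη)* (which is the relation a_x(α̃(ξ,η)) = κ(x,ξ)ã_ξ(κ(x,η))α̃(ξ,η)κ(x,ξη)*).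 -/
noncomputable section

/-- A `G`-particular covariant structure: from a 1-cochain `ρ` with the covariance
condition `ã_ξ(ρ_x) = κ(x,ξ)*·ρ_x`, setting `a_x := Ad(ρ_x)` and
`α(x,y) := ρ_x ρ_y ρ_xy*` yields a covariant structure. -/
theorem stmt_6 {G G' A : Type*} [Group G] [Group G']
    [NormedRing A] [StarRing A] [CStarRing A] [NormedAlgebra ℂ A] [CompleteSpace A]
    [StarModule ℂ A]
    (ta : G' → A ≃⋆ₐ[ℂ] A) (tα : G' → G' → A)
    (hta : IsTwistedAction ta tα)
    (ρ : G → A) (hρ1 : ρ 1 = 1) (hρu : ∀ x : G, IsUnitaryElem (ρ x))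
    (κ : G → G' → A)
    (hκu : ∀ (x : G) (ξ : G'), IsUnitaryElem (κ x ξ))
    (hκ1 : ∀ ξ : G', κ 1 ξ = 1) (hκ1' : ∀ x : G, κ x 1 = 1)
    (hcov : ∀ (x : G) (ξ : G'), ta ξ (ρ x) = star (κ x ξ) * ρ x) :
    -- (a,α) with a_x(b) = ρ_x b ρ_x*, α(x,y) = ρ_x ρ_y ρ_xy* is a twisted action:
    (∀ b : A, ρ 1 * b * star (ρ 1) = b) ∧
    (∀ x y : G, IsUnitaryElem (ρ x * ρ y * star (ρ (x * y)))) ∧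
    (∀ (x y : G) (b : A),
      ρ x * (ρ y * b * star (ρ y)) * star (ρ x) =
        (ρ x * ρ y * star (ρ (x * y))) * (ρ (x * y) * b * star (ρ (x * y))) *
          star (ρ x * ρ y * star (ρ (x * y)))) ∧
    (∀ x : G, ρ x * ρ 1 * star (ρ (x * 1)) = 1) ∧
    (∀ x : G, ρ 1 * ρ x * star (ρ (1 * x)) = 1) ∧
    (∀ x y z : G,
      (ρ x * ρ y * star (ρ (x * y))) * (ρ (x * y) * ρ z * star (ρ (x * y * z))) =
        (ρ x * (ρ y * ρ z * star (ρ (y * z))) * star (ρ x)) *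
          (ρ x * ρ (y * z) * star (ρ (x * (y * z))))) ∧
    -- commutation relation a_x ∘ ã_ξ = Ad(κ(x,ξ)) ∘ ã_ξ ∘ a_x:
    (∀ (x : G) (ξ : G') (b : A),
      ρ x * ta ξ b * star (ρ x) =
        κ x ξ * ta ξ (ρ x * b * star (ρ x)) * star (κ x ξ)) ∧
    -- ã_ξ(α(x,y)) = κ(x,ξ)* a_x(κ(y,ξ)*) α(x,y) κ(xy,ξ):
    (∀ (x y : G) (ξ : G'),
      ta ξ (ρ x * ρ y * star (ρ (x * y))) =
        star (κ x ξ) * (ρ x * star (κ y ξ) * star (ρ x)) *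
          (ρ x * ρ y * star (ρ (x * y))) * κ (x * y) ξ) ∧
    -- a_x(α̃(ξ,η)) = κ(x,ξ) ã_ξ(κ(x,η)) α̃(ξ,η) κ(x,ξη)*:
    (∀ (x : G) (ξ η : G'),
      ρ x * tα ξ η * star (ρ x) =
        κ x ξ * ta ξ (κ x η) * tα ξ η * star (κ x (ξ * η))) := by

  have hρl : ∀ (x : G) (b : A), ρ x * (star (ρ x) * b) = b := fun x b => by
    rw [← mul_assoc, (hρu x).2, one_mul]
  have hρr : ∀ (x : G) (b : A), star (ρ x) * (ρ x * b) = b := fun x b => by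
    rw [← mul_assoc, (hρu x).1, one_mul]
  have hκl : ∀ (x : G) (ξ : G') (b : A), κ x ξ * (star (κ x ξ) * b) = b := fun x ξ b => by
    rw [← mul_assoc, (hκu x ξ).2, one_mul]
  have hκr : ∀ (x : G) (ξ : G') (b : A), star (κ x ξ) * (κ x ξ * b) = b := fun x ξ b => by
    rw [← mul_assoc, (hκu x ξ).1, one_mul]
  refine ⟨?_, ?_, ?_, ?_, ?_, ?_, ?_, ?_, ?_⟩
  · intro b; simp [hρ1]
  · intro x y
    constructor <;>
      simp [star_mul, mul_assoc, hρl, hρr, (hρu _).1, (hρu _).2]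
  · intro x y b
    simp [star_mul, mul_assoc, hρl, hρr]
  · intro x; simp [hρ1, (hρu _).2]
  · intro x; simp [hρ1, (hρu _).2]
  · intro x y z
    simp [star_mul, mul_assoc, hρl, hρr, (hρu _).1, (hρu _).2]
  · intro x ξ b
    rw [map_mul, map_mul, map_star, hcov]
    simp [star_mul, mul_assoc, hκl, hκr, hρl, hρr, (hκu _ _).2]
  · intro x y ξ
    rw [map_mul, map_mul, map_star, hcov, hcov, hcov]
    simp [star_mul, mul_assoc, hκl, hκr, hρl, hρr]
  · intro x ξ η
    have huu : star (ta ξ (κ x η)) * ta ξ (κ x η) = 1 := by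
      rw [← map_star, ← map_mul, (hκu x η).1, map_one]
    have hul : ∀ b : A, ta ξ (κ x η) * (star (ta ξ (κ x η)) * b) = b := fun b => by
      rw [← mul_assoc, ← map_star, ← map_mul, (hκu x η).2, map_one, one_mul]
    have htαl : ∀ (ξ η : G') (b : A), tα ξ η * (star (tα ξ η) * b) = b := fun ξ η b => by
      rw [← mul_assoc, (hta.2.1 ξ η).2, one_mul]
    have htαr : ∀ (ξ η : G') (b : A), star (tα ξ η) * (tα ξ η * b) = b := fun ξ η b => by
      rw [← mul_assoc, (hta.2.1 ξ η).1, one_mul]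
    have h := hta.2.2.1 ξ η (ρ x)
    rw [hcov, hcov, map_mul, map_star, hcov] at h
    -- h : star (ta ξ (κ x η)) * (star (κ x ξ) * ρ x)
    --     = tα ξ η * (star (κ x (ξ*η)) * ρ x) * star (tα ξ η)
    have h' := congrArg (fun z => z * tα ξ η) h
    simp only [mul_assoc, htαr, (hta.2.1 ξ η).1, mul_one] at h'
    have h2 := congrArg (fun z => κ x ξ * (ta ξ (κ x η) * z) * star (ρ x)) h'
    simp only [mul_assoc, hul, hκl] at h2
    rw [mul_assoc, h2]
    simp [mul_assoc, (hρu x).2]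
end
end

section
/- Let (B, r, u, v) be a covariant morphism of a semi-covariant structure with r injective. Then for all x,y ∈ G and ξ,η ∈ G̃: ã_ξ(κ(x,η))·α̃(ξ,η)·ã_{ξη}(α(x,y)) = κ(x,ξ)*·(a_x∘ã_ξ)(κ(y,η)*)·a_x(κ(y,ξ)*)·α(x,y)·a_{xy}(α̃(ξ,η))·κ(xy,ξη). (This is derived by computing v_ξ u_x v_η u_y in two different ways.) -/
noncomputable section

/-- A covariant morphism with injective `r` forces the full compatibility relation
(computed from `v_ξ u_x v_η u_y` in two ways). -/
theorem stmt_9 {G G' A B : Type*} [Group G] [Group G']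
    [NormedRing A] [StarRing A] [CStarRing A] [NormedAlgebra ℂ A] [CompleteSpace A]
    [StarModule ℂ A]
    [NormedRing B] [StarRing B] [CStarRing B] [NormedAlgebra ℂ B] [CompleteSpace B]
    [StarModule ℂ B]
    (a : G → A ≃⋆ₐ[ℂ] A) (α : G → G → A)
    (ta : G' → A ≃⋆ₐ[ℂ] A) (tα : G' → G' → A) (κ : G → G' → A)
    (ha : IsTwistedAction a α) (hta : IsTwistedAction ta tα)
    (hκu : ∀ (x : G) (ξ : G'), IsUnitaryElem (κ x ξ))
    (hκ1 : ∀ ξ : G', κ 1 ξ = 1) (hκ1' : ∀ x : G, κ x 1 = 1)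
    (r : A →⋆ₐ[ℂ] B) (hr : Function.Injective r)
    (u : G → B) (v : G' → B)
    (hu : ∀ x : G, IsUnitaryElem (u x)) (hv : ∀ ξ : G', IsUnitaryElem (v ξ))
    (hru : ∀ (x : G) (b : A), u x * r b * star (u x) = r (a x b))
    (huu : ∀ x y : G, u x * u y = r (α x y) * u (x * y))
    (hrv : ∀ (ξ : G') (b : A), v ξ * r b * star (v ξ) = r (ta ξ b))
    (hvv : ∀ ξ η : G', v ξ * v η = r (tα ξ η) * v (ξ * η))
    (hcomm : ∀ (x : G) (ξ : G'), u x * v ξ = r (κ x ξ) * (v ξ * u x)) :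
    ∀ (x y : G) (ξ η : G'),
      ta ξ (κ x η) * tα ξ η * ta (ξ * η) (α x y) =
        star (κ x ξ) * a x (ta ξ (star (κ y η))) * a x (star (κ y ξ)) * α x y *
          a (x * y) (tα ξ η) * κ (x * y) (ξ * η) := by

  intro x y ξ η
  have hmerge : ∀ (b c : A) (t : B), r b * (r c * t) = r (b * c) * t := by
    intro b c t; rw [← mul_assoc, ← map_mul]
  have hvL : ∀ (ζ : G') (b : A) (t : B), v ζ * (r b * t) = r (ta ζ b) * (v ζ * t) := by
    intro ζ b t
    have h1 : star (v ζ) * v ζ = 1 := (hv ζ).1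
    calc v ζ * (r b * t) = (v ζ * r b * star (v ζ)) * (v ζ * t) := by
          rw [mul_assoc (v ζ * r b), ← mul_assoc (star (v ζ)), h1, one_mul, mul_assoc]
      _ = r (ta ζ b) * (v ζ * t) := by rw [hrv ζ b]
  have huL : ∀ (z : G) (b : A) (t : B), u z * (r b * t) = r (a z b) * (u z * t) := by
    intro z b t
    have h1 : star (u z) * u z = 1 := (hu z).1
    calc u z * (r b * t) = (u z * r b * star (u z)) * (u z * t) := by
          rw [mul_assoc (u z * r b), ← mul_assoc (star (u z)), h1, one_mul, mul_assoc]
      _ = r (a z b) * (u z * t) := by rw [hru z b]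
  have hswap : ∀ (z : G) (ζ : G') (t : B), u z * (v ζ * t) = r (κ z ζ) * (v ζ * (u z * t)) := by
    intro z ζ t
    calc u z * (v ζ * t) = (u z * v ζ) * t := (mul_assoc _ _ _).symm
      _ = (r (κ z ζ) * (v ζ * u z)) * t := by rw [hcomm]
      _ = r (κ z ζ) * (v ζ * (u z * t)) := by simp only [mul_assoc]
  have hswap0 : ∀ (z : G) (ζ : G'), v ζ * u z = r (star (κ z ζ)) * (u z * v ζ) := by
    intro z ζ
    have h1 : star (κ z ζ) * κ z ζ = 1 := (hκu z ζ).1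
    calc v ζ * u z = r 1 * (v ζ * u z) := by rw [map_one, one_mul]
      _ = r (star (κ z ζ) * κ z ζ) * (v ζ * u z) := by rw [h1]
      _ = r (star (κ z ζ)) * (r (κ z ζ) * (v ζ * u z)) := by rw [map_mul, mul_assoc]
      _ = r (star (κ z ζ)) * (u z * v ζ) := by rw [← hcomm]
  have hswap' : ∀ (z : G) (ζ : G') (t : B),
      v ζ * (u z * t) = r (star (κ z ζ)) * (u z * (v ζ * t)) := by
    intro z ζ t
    calc v ζ * (u z * t) = (v ζ * u z) * t := (mul_assoc _ _ _).symm
      _ = (r (star (κ z ζ)) * (u z * v ζ)) * t := by rw [hswap0]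
      _ = r (star (κ z ζ)) * (u z * (v ζ * t)) := by simp only [mul_assoc]
  have hvv' : ∀ (ζ τ : G') (t : B), v ζ * (v τ * t) = r (tα ζ τ) * (v (ζ * τ) * t) := by
    intro ζ τ t
    calc v ζ * (v τ * t) = (v ζ * v τ) * t := (mul_assoc _ _ _).symm
      _ = (r (tα ζ τ) * v (ζ * τ)) * t := by rw [hvv]
      _ = r (tα ζ τ) * (v (ζ * τ) * t) := by simp only [mul_assoc]
  have huu' : ∀ (z w : G) (t : B), u z * (u w * t) = r (α z w) * (u (z * w) * t) := by
    intro z w t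
    calc u z * (u w * t) = (u z * u w) * t := (mul_assoc _ _ _).symm
      _ = (r (α z w) * u (z * w)) * t := by rw [huu]
      _ = r (α z w) * (u (z * w) * t) := by simp only [mul_assoc]
  set L : A := ta ξ (κ x η) * tα ξ η * ta (ξ * η) (α x y) with hL
  set R : A := star (κ x ξ) * a x (ta ξ (star (κ y η))) * a x (star (κ y ξ)) * α x y *
      a (x * y) (tα ξ η) * κ (x * y) (ξ * η) with hR
  have E1 : v ξ * (u x * (v η * u y)) = r L * (v (ξ * η) * u (x * y)) := by
    calc v ξ * (u x * (v η * u y))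
        = v ξ * (r (κ x η) * (v η * (u x * u y))) := by rw [hswap x η (u y)]
      _ = r (ta ξ (κ x η)) * (v ξ * (v η * (u x * u y))) := by rw [hvL]
      _ = r (ta ξ (κ x η)) * (r (tα ξ η) * (v (ξ * η) * (u x * u y))) := by rw [hvv']
      _ = r (ta ξ (κ x η)) * (r (tα ξ η) * (v (ξ * η) * (r (α x y) * u (x * y)))) := by
          rw [huu x y]
      _ = r (ta ξ (κ x η)) * (r (tα ξ η) * (r (ta (ξ * η) (α x y)) * (v (ξ * η) * u (x * y)))) := by
          rw [hvL]
      _ = r L * (v (ξ * η) * u (x * y)) := by rw [hmerge, hmerge, hL]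
  have E2 : v ξ * (u x * (v η * u y)) = r R * (v (ξ * η) * u (x * y)) := by
    calc v ξ * (u x * (v η * u y))
        = (v ξ * u x) * (v η * u y) := (mul_assoc _ _ _).symm
      _ = (r (star (κ x ξ)) * (u x * v ξ)) * (r (star (κ y η)) * (u y * v η)) := by
          rw [hswap0 x ξ, hswap0 y η]
      _ = r (star (κ x ξ)) * (u x * (v ξ * (r (star (κ y η)) * (u y * v η)))) := by
          simp only [mul_assoc]
      _ = r (star (κ x ξ)) * (u x * (r (ta ξ (star (κ y η))) * (v ξ * (u y * v η)))) := by
          rw [hvL]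
      _ = r (star (κ x ξ)) * (r (a x (ta ξ (star (κ y η)))) * (u x * (v ξ * (u y * v η)))) := by
          rw [huL]
      _ = r (star (κ x ξ)) * (r (a x (ta ξ (star (κ y η)))) *
            (u x * (r (star (κ y ξ)) * (u y * (v ξ * v η))))) := by rw [hswap']
      _ = r (star (κ x ξ)) * (r (a x (ta ξ (star (κ y η)))) *
            (r (a x (star (κ y ξ))) * (u x * (u y * (v ξ * v η))))) := by rw [huL]
      _ = r (star (κ x ξ)) * (r (a x (ta ξ (star (κ y η)))) *
            (r (a x (star (κ y ξ))) * (u x * (u y * (r (tα ξ η) * v (ξ * η)))))) := by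
          rw [hvv ξ η]
      _ = r (star (κ x ξ)) * (r (a x (ta ξ (star (κ y η)))) *
            (r (a x (star (κ y ξ))) * (r (α x y) * (u (x * y) * (r (tα ξ η) * v (ξ * η)))))) := by
          rw [huu']
      _ = r (star (κ x ξ)) * (r (a x (ta ξ (star (κ y η)))) *
            (r (a x (star (κ y ξ))) * (r (α x y) *
              (r (a (x * y) (tα ξ η)) * (u (x * y) * v (ξ * η)))))) := by rw [huL]
      _ = r (star (κ x ξ)) * (r (a x (ta ξ (star (κ y η)))) *
            (r (a x (star (κ y ξ))) * (r (α x y) *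
              (r (a (x * y) (tα ξ η)) * (r (κ (x * y) (ξ * η)) * (v (ξ * η) * u (x * y))))))) := by
          rw [hcomm (x * y) (ξ * η)]
      _ = r R * (v (ξ * η) * u (x * y)) := by
          rw [hmerge, hmerge, hmerge, hmerge, hmerge, hR]
  have e : r L * (v (ξ * η) * u (x * y)) = r R * (v (ξ * η) * u (x * y)) := E1.symm.trans E2
  have hw : (v (ξ * η) * u (x * y)) * (star (u (x * y)) * star (v (ξ * η))) = 1 := by
    rw [mul_assoc, ← mul_assoc (u (x * y)), (hu (x * y)).2, one_mul, (hv (ξ * η)).2]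
  have e2 : r L = r R := by
    have h := congrArg (fun z => z * (star (u (x * y)) * star (v (ξ * η)))) e
    simpa only [mul_assoc, ← mul_assoc (v (ξ * η)) (u (x * y)), hw, mul_one] using h
  exact hr e2
end
end

section
/- Let {(A,κ),(a,α),(ã,α̃)} be a covariant structure and let r : A → B be a unital *-homomorphism into a unital C*-algebra B, u : G → U(B), v : G̃ → U(B) forming a covariant morphism of the covariant structure (so (r,u) is covariant for (a,α), (r,v) is covariant for (ã,α̃), and u_x v_ξ = r(κ(x,ξ)) v_ξ u_x). Define w(x,ξ) := v_ξ u_x. Then (r,w) is a covariant morphism of the twisted C*-dynamical system (A, →a, →α) of the group G × G̃: w(x,ξ)·w(y,η) = r(→α((x,ξ),(y,η)))·w(xy,ξη) and w(x,ξ)·r(A)·w(x,ξ)* = r(→a_{(x,ξ)}(A)), where →a_{(x,ξ)} = ã_ξ∘a_x and →α((x,ξ),(y,η)) = ã_ξ(κ(x,η))·α̃(ξ,η)·ã_{ξη}(α(x,y)). -/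
noncomputable section

/-- From a covariant morphism `(r,u,v)` of a covariant structure, `w(x,ξ) := v_ξ u_x`
defines a covariant morphism of the twisted system `(A, →a, →α)` of `G × G̃`. -/
theorem stmt_10 {G G' A B : Type*} [Group G] [Group G']
    [NormedRing A] [StarRing A] [CStarRing A] [NormedAlgebra ℂ A] [CompleteSpace A]
    [StarModule ℂ A]
    [NormedRing B] [StarRing B] [CStarRing B] [NormedAlgebra ℂ B] [CompleteSpace B]
    [StarModule ℂ B]
    (a : G → A ≃⋆ₐ[ℂ] A) (α : G → G → A)
    (ta : G' → A ≃⋆ₐ[ℂ] A) (tα : G' → G' → A) (κ : G → G' → A)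
    (h : IsCovariantStructure a α ta tα κ)
    (r : A →⋆ₐ[ℂ] B) (hr : Function.Injective r)
    (u : G → B) (v : G' → B)
    (hu : ∀ x : G, IsUnitaryElem (u x)) (hv : ∀ ξ : G', IsUnitaryElem (v ξ))
    (hru : ∀ (x : G) (b : A), u x * r b * star (u x) = r (a x b))
    (huu : ∀ x y : G, u x * u y = r (α x y) * u (x * y))
    (hrv : ∀ (ξ : G') (b : A), v ξ * r b * star (v ξ) = r (ta ξ b))
    (hvv : ∀ ξ η : G', v ξ * v η = r (tα ξ η) * v (ξ * η))
    (hcomm : ∀ (x : G) (ξ : G'), u x * v ξ = r (κ x ξ) * (v ξ * u x)) :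
    (∀ (x y : G) (ξ η : G'),
      (v ξ * u x) * (v η * u y) =
        r (ta ξ (κ x η) * tα ξ η * ta (ξ * η) (α x y)) * (v (ξ * η) * u (x * y))) ∧
    (∀ (x : G) (ξ : G') (b : A),
      (v ξ * u x) * r b * star (v ξ * u x) = r (ta ξ (a x b))) := by
  have hvr : ∀ (ξ : G') (b : A), v ξ * r b = r (ta ξ b) * v ξ := by
    intro ξ b
    have := hrv ξ b
    calc v ξ * r b = v ξ * r b * (star (v ξ) * v ξ) := by rw [(hv ξ).1, mul_one]
    _ = (v ξ * r b * star (v ξ)) * v ξ := by simp only [mul_assoc]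
    _ = r (ta ξ b) * v ξ := by rw [this]
  constructor
  · intro x y ξ η
    calc (v ξ * u x) * (v η * u y)
        = v ξ * (u x * v η) * u y := by simp only [mul_assoc]
      _ = v ξ * (r (κ x η) * (v η * u x)) * u y := by rw [hcomm]
      _ = (v ξ * r (κ x η)) * (v η * (u x * u y)) := by simp only [mul_assoc]
      _ = (r (ta ξ (κ x η)) * v ξ) * (v η * (r (α x y) * u (x * y))) := by
          rw [hvr, huu]
      _ = r (ta ξ (κ x η)) * (v ξ * v η) * r (α x y) * u (x * y) := by simp only [mul_assoc]
      _ = r (ta ξ (κ x η)) * (r (tα ξ η) * v (ξ * η)) * r (α x y) * u (x * y) := by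
          rw [hvv]
      _ = r (ta ξ (κ x η)) * r (tα ξ η) * (v (ξ * η) * r (α x y)) * u (x * y) := by
          simp only [mul_assoc]
      _ = r (ta ξ (κ x η)) * r (tα ξ η) * (r (ta (ξ * η) (α x y)) * v (ξ * η)) * u (x * y) := by
          rw [hvr]
      _ = r (ta ξ (κ x η) * tα ξ η * ta (ξ * η) (α x y)) * (v (ξ * η) * u (x * y)) := by
          rw [map_mul, map_mul]; simp only [mul_assoc]
  · intro x ξ b
    calc (v ξ * u x) * r b * star (v ξ * u x)
        = v ξ * (u x * r b * star (u x)) * star (v ξ) := by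
          rw [star_mul]; simp only [mul_assoc]
      _ = v ξ * r (a x b) * star (v ξ) := by rw [hru]
      _ = r (ta ξ (a x b)) := hrv ξ (a x b)
end
end

section
/- Conversely, let (r,w) be a covariant morphism of the twisted C*-dynamical system (A, →a, →α) with group G × G̃ arising from a covariant structure {(A,κ),(a,α),(ã,α̃)}. Define u_x := w(x,ε) and v_ξ := w(e,ξ). Then (r,u,v) is a covariant morphism of the covariant structure: u_x u_y = r(α(x,y)) u_{xy}, v_ξ v_η = r(α̃(ξ,η)) v_{ξη}, u_x r(A) u_x* = r(a_x(A)), v_ξ r(A) v_ξ* = r(ã_ξ(A)), and u_x v_ξ = r(κ(x,ξ)) v_ξ u_x for all x,y ∈ G, ξ,η ∈ G̃, A ∈ A. Moreover w(x,ξ) = v_ξ u_x. -/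
noncomputable section

/-- Conversely, from a covariant morphism `(r,w)` of `(A,→a,→α)` with group `G × G̃`,
setting `u_x := w(x,ε)` and `v_ξ := w(e,ξ)` gives a covariant morphism of the
covariant structure, and `w(x,ξ) = v_ξ u_x`. -/
theorem stmt_12 {G G' A B : Type*} [Group G] [Group G']
    [NormedRing A] [StarRing A] [CStarRing A] [NormedAlgebra ℂ A] [CompleteSpace A]
    [StarModule ℂ A]
    [NormedRing B] [StarRing B] [CStarRing B] [NormedAlgebra ℂ B] [CompleteSpace B]
    [StarModule ℂ B]
    (a : G → A ≃⋆ₐ[ℂ] A) (α : G → G → A)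
    (ta : G' → A ≃⋆ₐ[ℂ] A) (tα : G' → G' → A) (κ : G → G' → A)
    (h : IsCovariantStructure a α ta tα κ)
    (r : A →⋆ₐ[ℂ] B)
    (w : G × G' → B)
    (hw : ∀ X : G × G', IsUnitaryElem (w X))
    (hwr : ∀ (X : G × G') (b : A), w X * r b * star (w X) = r (ta X.2 (a X.1 b)))
    (hww : ∀ X Y : G × G',
      w X * w Y =
        r (ta X.2 (κ X.1 Y.2) * tα X.2 Y.2 * ta (X.2 * Y.2) (α X.1 Y.1)) * w (X * Y)) :
    (∀ x y : G, w (x, 1) * w (y, 1) = r (α x y) * w (x * y, 1)) ∧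
    (∀ ξ η : G', w (1, ξ) * w (1, η) = r (tα ξ η) * w (1, ξ * η)) ∧
    (∀ (x : G) (b : A), w (x, 1) * r b * star (w (x, 1)) = r (a x b)) ∧
    (∀ (ξ : G') (b : A), w (1, ξ) * r b * star (w (1, ξ)) = r (ta ξ b)) ∧
    (∀ (x : G) (ξ : G'),
      w (x, 1) * w (1, ξ) = r (κ x ξ) * (w (1, ξ) * w (x, 1))) ∧
    (∀ (x : G) (ξ : G'), w (x, ξ) = w (1, ξ) * w (x, 1)) := by

  obtain ⟨⟨ha1, hαu, hacoc, hαr1, hαl1, hαcoc⟩, ⟨hta1, htαu, htacoc, htαr1, htαl1, htαcoc⟩,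
    hκu, hκ1, hκ1', hc1, hc2, hc3⟩ := h
  refine ⟨?_, ?_, ?_, ?_, ?_, ?_⟩
  · intro x y
    have := hww (x, 1) (y, 1)
    simpa [hta1, hκ1', htαl1, Prod.mk_mul_mk] using this
  · intro ξ η
    have := hww (1, ξ) (1, η)
    simpa [hαl1, hκ1, Prod.mk_mul_mk] using this
  · intro x b
    simpa [hta1] using hwr (x, 1) b
  · intro ξ b
    simpa [ha1] using hwr (1, ξ) b
  · intro x ξ
    have h1 := hww (x, 1) (1, ξ)
    have h2 := hww (1, ξ) (x, 1)
    simp only [Prod.mk_mul_mk, one_mul, mul_one] at h1 h2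
    rw [h1, h2]
    simp [hta1, hκ1, hαr1, hαl1, htαl1, htαr1]
  · intro x ξ
    have h2 := hww (1, ξ) (x, 1)
    simp only [Prod.mk_mul_mk, one_mul, mul_one] at h2
    rw [h2]
    simp [hκ1, hαl1, htαr1]
end
end

section
/- Suppose in a covariant structure the two twisted actions are untwisted, i.e. α = 1 and α̃ = 1. Then the compatibility relations force κ to be a pair of crossed morphisms: κ(x, ξη) = κ(x,ξ)·ã_ξ(κ(x,η)) and κ(xy, ξ)* = κ(x,ξ)*·a_x(κ(y,ξ)*) for all x,y ∈ G and ξ,η ∈ G̃. Moreover the associated 2-cocycles on G × G̃ are →α((x,ξ),(y,η)) = ã_ξ(κ(x,η)) and ←α((x,ξ),(y,η)) = a_x(κ(y,ξ)*). -/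
noncomputable section

/-- If `α = 1` and `α̃ = 1`, the compatibility relations force `κ` to be a pair of
crossed morphisms, and the associated 2-cocycles on `G × G̃` are
`→α((x,ξ),(y,η)) = ã_ξ(κ(x,η))` and `←α((x,ξ),(y,η)) = a_x(κ(y,ξ)*)`. -/
theorem stmt_14 {G G' A : Type*} [Group G] [Group G']
    [NormedRing A] [StarRing A] [CStarRing A] [NormedAlgebra ℂ A] [CompleteSpace A]
    [StarModule ℂ A]
    (a : G → A ≃⋆ₐ[ℂ] A)
    (ta : G' → A ≃⋆ₐ[ℂ] A) (κ : G → G' → A)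
    (h : IsCovariantStructure a (fun _ _ => (1 : A)) ta (fun _ _ => (1 : A)) κ) :
    (∀ (x : G) (ξ η : G'), κ x (ξ * η) = κ x ξ * ta ξ (κ x η)) ∧
    (∀ (x y : G) (ξ : G'), star (κ (x * y) ξ) = star (κ x ξ) * a x (star (κ y ξ))) ∧
    (∀ (x y : G) (ξ η : G'),
      ta ξ (κ x η) * (1 : A) * ta (ξ * η) (1 : A) = ta ξ (κ x η)) ∧
    (∀ (x y : G) (ξ η : G'),
      a x (star (κ y ξ)) * (1 : A) * a (x * y) (1 : A) = a x (star (κ y ξ))) := by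
  obtain ⟨_, _, hu, _, _, _, h7, h8⟩ := h
  refine ⟨?_, ?_, fun x y ξ η => by simp, fun x y ξ η => by simp⟩
  · intro x ξ η
    have := h7 x ξ η
    simp only [map_one, mul_one] at this
    have h2 := congrArg (· * κ x (ξ * η)) this
    simpa [mul_assoc, (hu x (ξ * η)).1] using h2
  · intro x y ξ
    have := h8 x y ξ
    simp only [map_one, mul_one] at this
    have h2 := congrArg (· * star (κ (x * y) ξ)) this
    simpa [mul_assoc, (hu (x * y) ξ).2] using h2
end
end
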